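/- Let A be a Banach algebra. If A** = A**·Z̃₁ℓ(A**), i.e., every element of A** is a first Arens product b''c'' with b'' ∈ A** and c'' ∈ Z̃₁ℓ(A**), then A***·A** ⊆ w̃apℓ(A), i.e., for all a''' ∈ A*** and a'' ∈ A** the functional a'''a'' belongs to w̃apℓ(A). -/

import Mathlib

/-!
The first Arens product is associative, so `(a'''a'')(x''b'') = a'''((a''x'')b'')`. By hypothesis
`a''x'' = e''c''` with `c''` in the left weak topological center, hence
`(a'''a'')(x''b'') = (a'''e'')(c''b'')`, which is weak* continuous in `b''` because `b'' ↦ c''b''`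
is continuous from the weak* topology and `a'''e''` is a bounded functional.
-/

namespace NormedSpace

/-- The topological dual of a seminormed space `E` (as in the older Mathlib). -/
abbrev Dual (𝕜 : Type*) [NontriviallyNormedField 𝕜] (E : Type*) [SeminormedAddCommGroup E]
    [NormedSpace 𝕜 E] : Type _ := E →L[𝕜] 𝕜

end NormedSpace

open NormedSpace Filter Topology

noncomputable section

/-- The Arens adjoint of a bounded bilinear map `m : X × Y → Z`:
`⟨adjB m z' x, y⟩ = ⟨z', m x y⟩`. -/
def adjB {X Y Z : Type*} [NormedAddCommGroup X] [NormedSpace ℂ X]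
    [NormedAddCommGroup Y] [NormedSpace ℂ Y] [NormedAddCommGroup Z] [NormedSpace ℂ Z]
    (m : X →L[ℂ] Y →L[ℂ] Z) : Dual ℂ Z →L[ℂ] X →L[ℂ] Dual ℂ Y :=
  ((ContinuousLinearMap.compL ℂ X (Y →L[ℂ] Z) (Y →L[ℂ] ℂ)).flip m).comp
    (ContinuousLinearMap.compL ℂ Y Z ℂ)

variable (A : Type*) [NonUnitalNormedRing A] [NormedSpace ℂ A]
  [SMulCommClass ℂ A A] [IsScalarTower ℂ A A] [CompleteSpace A]

/-- The first Arens product on the bidual `A**`, obtained by the usual three-step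
construction: `(a'·a)(b) = a'(ab)`, `(a''·a')(a) = a''(a'·a)`, `(a''b'')(a') = a''(b''·a')`. -/
def arens : Dual ℂ (Dual ℂ A) →L[ℂ] Dual ℂ (Dual ℂ A) →L[ℂ] Dual ℂ (Dual ℂ A) :=
  adjB (adjB (adjB (ContinuousLinearMap.mul ℂ A)))

/-- The left weak topological center `Z̃₁ℓ(A**)`:
those `a''` for which `b'' ↦ a''b''` is weak*-to-weak continuous on `A**`. -/
def wkCenterL : Set (Dual ℂ (Dual ℂ A)) :=
  {a'' | Continuous fun b'' : WeakDual ℂ (Dual ℂ A) =>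
      (arens A a'' b'' : WeakSpace ℂ (Dual ℂ (Dual ℂ A)))}

/-- The right weak topological center `Z̃₁ʳ(A**)`:
those `a''` for which `b'' ↦ b''a''` is weak*-to-weak continuous on `A**`. -/
def wkCenterR : Set (Dual ℂ (Dual ℂ A)) :=
  {a'' | Continuous fun b'' : WeakDual ℂ (Dual ℂ A) =>
      (arens A b'' a'' : WeakSpace ℂ (Dual ℂ (Dual ℂ A)))}

/-- The topological center `Z₁(A**)`:
those `a''` for which `b'' ↦ a''b''` is weak*-to-weak* continuous on `A**`. -/
def topCenterL : Set (Dual ℂ (Dual ℂ A)) :=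
  {a'' | Continuous fun b'' : WeakDual ℂ (Dual ℂ A) =>
      (arens A a'' b'' : WeakDual ℂ (Dual ℂ A))}

/-- `w̃apℓ(A) ⊆ A***`: those `a'''` such that for every `a'' ∈ A**` the functional
`a'''a'' : A** → ℂ`, `(a'''a'')(b'') = a'''(a''b'')`, is weak* continuous. -/
def wapTildeL : Set (Dual ℂ (Dual ℂ (Dual ℂ A))) :=
  {a''' | ∀ a'' : Dual ℂ (Dual ℂ A),
    Continuous fun b'' : WeakDual ℂ (Dual ℂ A) => a'''.comp (arens A a'') b''}

section

variable {A}

omit [CompleteSpace A]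

lemma adjB_apply {X Y Z : Type*} [NormedAddCommGroup X] [NormedSpace ℂ X]
    [NormedAddCommGroup Y] [NormedSpace ℂ Y] [NormedAddCommGroup Z] [NormedSpace ℂ Z]
    (m : X →L[ℂ] Y →L[ℂ] Z) (z' : Dual ℂ Z) (x : X) (y : Y) :
    adjB m z' x y = z' (m x y) :=
  rfl

lemma arens_assoc (x y z : Dual ℂ (Dual ℂ A)) :
    arens A (arens A x y) z = arens A x (arens A y z) := by
  ext a'
  simp only [arens, adjB_apply]
  congr 1
  ext a
  simp only [adjB_apply]
  congr 1
  ext b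
  simp only [adjB_apply]
  congr 1
  ext c
  simp only [adjB_apply, ContinuousLinearMap.mul_apply', mul_assoc]

lemma continuous_comp_arens_of_mem_wkCenterL {c : Dual ℂ (Dual ℂ A)} (hc : c ∈ wkCenterL A)
    (φ : Dual ℂ (Dual ℂ (Dual ℂ A))) :
    Continuous fun b : WeakDual ℂ (Dual ℂ A) => φ (arens A c b) :=
  φ.continuous.comp hc

lemma continuous_comp_arens_of_eq_arens {d e c : Dual ℂ (Dual ℂ A)} (hc : c ∈ wkCenterL A)
    (hd : d = arens A e c) (φ : Dual ℂ (Dual ℂ (Dual ℂ A))) :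
    Continuous fun b : WeakDual ℂ (Dual ℂ A) => φ (arens A d b) := by
  subst hd
  exact (continuous_comp_arens_of_mem_wkCenterL hc (φ.comp (arens A e))).congr fun b =>
    congrArg φ (arens_assoc e c b).symm

end

/-- if `A** = A**·Z̃₁ℓ(A**)` (every element of `A**` is a first Arens product
`b''c''` with `c'' ∈ Z̃₁ℓ(A**)`), then `A***·A** ⊆ w̃apℓ(A)`. -/
theorem stmt7
    (h : ∀ a'' : Dual ℂ (Dual ℂ A), ∃ b'' c'' : Dual ℂ (Dual ℂ A),
      c'' ∈ wkCenterL A ∧ a'' = arens A b'' c'') :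
    ∀ (a''' : Dual ℂ (Dual ℂ (Dual ℂ A))) (a'' : Dual ℂ (Dual ℂ A)),
      a'''.comp (arens A a'') ∈ wapTildeL A := by
  intro a''' a'' x''
  obtain ⟨e'', c'', hc, hx⟩ := h (arens A a'' x'')
  exact (continuous_comp_arens_of_eq_arens hc hx a''').congr fun b'' =>
    congrArg a''' (arens_assoc a'' x'' b'')

end
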